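/- Let d ≥ 1 and let p, k be natural numbers with p < k and k + p even, and set α = (k+p)/2 and β = (k−p)/2. Then for all x, y ∈ C(d,α,β) one has x ∈ N(y,p,k); that is, ‖x − (y + p·e₁)‖₁ ≤ k or ‖x − (y − p·e₁)‖₁ ≤ k. In particular C(d,α,β) is a clique of the displacement graph G(d,p,k). -/

import Mathlib

open Finset

/-- The L1 norm on the integer lattice `Fin d → ℤ`. -/
def norm1 {d : ℕ} (x : Fin d → ℤ) : ℤ := ∑ i, |x i|

/-- The first standard basis vector of `Fin d → ℤ`. -/
def e1 {d : ℕ} : Fin d → ℤ := fun i => if (i : ℕ) = 0 then 1 else 0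

/-- `inN p k x y` means `y` belongs to the displaced distance-`k` neighborhood `N(x, p, k)`,
i.e. `‖y − (x + p·e₁)‖₁ ≤ k` or `‖y − (x − p·e₁)‖₁ ≤ k`. -/
def inN {d : ℕ} (p k : ℕ) (x y : Fin d → ℤ) : Prop :=
  norm1 (y - (x + (p : ℤ) • e1)) ≤ (k : ℤ) ∨ norm1 (y - (x - (p : ℤ) • e1)) ≤ (k : ℤ)


/-- `∑_{i=2}^d |x_i|` : the sum of absolute values of all but the first coordinate. -/
def tailSum {d : ℕ} (x : Fin d → ℤ) : ℤ :=
  ∑ i ∈ Finset.univ.filter (fun i : Fin d => (i : ℕ) ≠ 0), |x i|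


/-- The set `C(d, α, β) = { x : ‖x‖₁ ≤ α and ∑_{i=2}^d |x_i| ≤ β }`. -/
def Cset (d : ℕ) (α β : ℤ) : Set (Fin d → ℤ) := {x | norm1 x ≤ α ∧ tailSum x ≤ β}

/-! Since `N(y,p,k)` is symmetric in `x, y`, we may assume `y₁ ≤ x₁` and use the displacement
`+p`: with `s, t` the tail sums of `x, y`, the distance is `|x₁ - y₁ - p| + (s + t)` at most.
If `x₁ - y₁ ≥ p` this is at most `(|x₁| + s) + (|y₁| + t) - p ≤ 2α - p = k`; otherwise it is at
most `p + 2β = k`. -/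

lemma norm1_neg {d : ℕ} (z : Fin d → ℤ) : norm1 (-z) = norm1 z := by
  simp only [norm1, Pi.neg_apply, abs_neg]

lemma inN_symm {d : ℕ} {p k : ℕ} {x y : Fin d → ℤ} (h : inN p k x y) : inN p k y x := by
  have hplus : x - (y + (p : ℤ) • e1) = -(y - (x - (p : ℤ) • e1)) := by abel
  have hminus : x - (y - (p : ℤ) • e1) = -(y - (x + (p : ℤ) • e1)) := by abel
  rw [inN, hplus, hminus, norm1_neg, norm1_neg]
  exact h.symm

lemma norm1_eq_abs_add_tailSum {d : ℕ} (hd : 0 < d) (z : Fin d → ℤ) :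
    norm1 z = |z ⟨0, hd⟩| + tailSum z := by
  have hfirst : univ.filter (fun i : Fin d => ¬(i : ℕ) ≠ 0) = {⟨0, hd⟩} := by
    ext i
    simp [Fin.ext_iff]
  rw [norm1, tailSum, ← sum_filter_add_sum_filter_not univ (fun i : Fin d => (i : ℕ) ≠ 0),
    hfirst, sum_singleton, add_comm]

lemma tailSum_sub_le {d : ℕ} (x y : Fin d → ℤ) : tailSum (x - y) ≤ tailSum x + tailSum y := by
  rw [tailSum, tailSum, tailSum, ← sum_add_distrib]
  exact sum_le_sum fun i _ => abs_sub _ _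

lemma tailSum_sub_smul_e1 {d : ℕ} (z : Fin d → ℤ) (c : ℤ) : tailSum (z - c • e1) = tailSum z := by
  refine sum_congr rfl fun i hi => ?_
  simp [e1, (mem_filter.mp hi).2]

lemma norm1_sub_add_smul_e1 {d : ℕ} (hd : 0 < d) (x y : Fin d → ℤ) (c : ℤ) :
    norm1 (x - (y + c • e1)) = |x ⟨0, hd⟩ - y ⟨0, hd⟩ - c| + tailSum (x - y) := by
  rw [sub_add_eq_sub_sub, norm1_eq_abs_add_tailSum hd, tailSum_sub_smul_e1]
  simp [e1]

lemma norm1_sub_add_smul_e1_le_of_mem_Cset {d : ℕ} (hd : 0 < d) {p k : ℕ} {α β : ℤ}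
    (hα : 2 * α = (k : ℤ) + (p : ℤ)) (hβ : 2 * β = (k : ℤ) - (p : ℤ))
    {x y : Fin d → ℤ} (hx : x ∈ Cset d α β) (hy : y ∈ Cset d α β)
    (hxy : y ⟨0, hd⟩ ≤ x ⟨0, hd⟩) : norm1 (x - (y + (p : ℤ) • e1)) ≤ k := by
  obtain ⟨hxα, hxβ⟩ := hx
  obtain ⟨hyα, hyβ⟩ := hy
  rw [norm1_eq_abs_add_tailSum hd] at hxα hyα
  rw [norm1_sub_add_smul_e1 hd]
  have htail := tailSum_sub_le x y
  have hx0 := le_abs_self (x ⟨0, hd⟩)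
  have hy0 := neg_abs_le (y ⟨0, hd⟩)
  rcases abs_cases (x ⟨0, hd⟩ - y ⟨0, hd⟩ - p) with ⟨habs, -⟩ | ⟨habs, -⟩ <;> rw [habs] <;> linarith

theorem stmt8_general (d : ℕ) (hd : 0 < d) (p k : ℕ)
    (α β : ℤ) (hα : 2 * α = (k : ℤ) + (p : ℤ)) (hβ : 2 * β = (k : ℤ) - (p : ℤ))
    (x y : Fin d → ℤ) (hx : x ∈ Cset d α β) (hy : y ∈ Cset d α β) :
    inN p k y x := by
  rcases le_total (y ⟨0, hd⟩) (x ⟨0, hd⟩) with hxy | hyx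
  · exact Or.inl (norm1_sub_add_smul_e1_le_of_mem_Cset hd hα hβ hx hy hxy)
  · exact inN_symm (Or.inl (norm1_sub_add_smul_e1_le_of_mem_Cset hd hα hβ hy hx hyx))

/-- If `p < k`, `k + p` is even, `α = (k+p)/2` and `β = (k−p)/2`, then any two points of
`C(d, α, β)` are displaced distance-`k` neighbors: for all `x, y ∈ C(d, α, β)`,
`x ∈ N(y, p, k)`; so `C(d, α, β)` is a clique of the displacement graph `G(d, p, k)`. -/
theorem stmt8 (d : ℕ) (hd : 0 < d) (p k : ℕ) (hpk : p < k) (heven : Even (k + p))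
    (α β : ℤ) (hα : 2 * α = (k : ℤ) + (p : ℤ)) (hβ : 2 * β = (k : ℤ) - (p : ℤ))
    (x y : Fin d → ℤ) (hx : x ∈ Cset d α β) (hy : y ∈ Cset d α β) :
    inN p k y x :=
  stmt8_general d hd p k α β hα hβ x y hx hy
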